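/- arXiv:2002.06370 — 2 statements merged into one kernel-verified Lean document; each statement's English description precedes it below -/
import Mathlib

section
/- The imaginary part of η(z) = (z²−1)^{1/2} − z is strictly positive for every z ∈ ℂ ∖ ((−∞,−1]∪[1,∞)), where the branch of the square root is chosen so that η is analytic on this domain and η(0) = i. -/
/-!
`η` never takes a real value off the cut: a real root `w` of `w² + 2zw + 1 = 0` forces `z` to be
real with `(w + z)² = z² - 1 ≥ 0`, i.e. `z` on the cut. The complement of the cut is star-shaped
about `0`, hence connected, so the continuous, nonvanishing `Im η` keeps the sign of `Im η(0) = 1`.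
-/

open Complex

/-- The branch cut set `(-∞,-1] ∪ [1,∞)` viewed inside `ℂ`. -/
def pearceyCut : Set ℂ := {z : ℂ | z.im = 0 ∧ (z.re ≤ -1 ∨ 1 ≤ z.re)}

theorem IsPreconnected.pos_of_ne_zero {X α : Type*} [TopologicalSpace X] [LinearOrder α]
    [TopologicalSpace α] [OrderClosedTopology α] [Zero α] {s : Set X} {f : X → α}
    (hs : IsPreconnected s) (hf : ContinuousOn f s) (hf0 : ∀ x ∈ s, f x ≠ 0) {a : X} (ha : a ∈ s)
    (hfa : 0 < f a) {x : X} (hx : x ∈ s) : 0 < f x := by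
  by_contra! hfx
  obtain ⟨y, hy, hfy⟩ := hs.intermediate_value hx ha hf ⟨hfx, hfa.le⟩
  exact hf0 y hy hfy

theorem starConvex_zero_compl_pearceyCut : StarConvex ℝ 0 pearceyCutᶜ := by
  refine starConvex_zero_iff.2 fun z hz a ha₀ ha₁ ↦ ?_
  simp only [pearceyCut, Set.mem_compl_iff, Set.mem_ofPred_eq, not_and_or, not_or, not_le,
    Complex.real_smul, re_ofReal_mul, im_ofReal_mul, mul_eq_zero] at hz ⊢
  rcases ha₀.eq_or_lt with rfl | ha₀
  · right; constructor <;> linarith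
  rcases hz with hz | ⟨hz₁, hz₂⟩
  · left; exact ⟨ha₀.ne', hz⟩
  · right; constructor <;> nlinarith

theorem mem_pearceyCut_of_sq_add_two_mul_mul_add_one_eq_zero {z w : ℂ}
    (h : w ^ 2 + 2 * z * w + 1 = 0) (hw : w.im = 0) : z ∈ pearceyCut := by
  have hre : w.re ^ 2 + 2 * z.re * w.re + 1 = 0 := by
    simpa [sq, hw] using congrArg Complex.re h
  have him : 2 * z.im * w.re = 0 := by
    simpa [sq, hw] using congrArg Complex.im h
  have hw₀ : w.re ≠ 0 := by
    rintro hw₀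
    simp [hw₀] at hre
  have hsq : (w.re + z.re) ^ 2 = z.re ^ 2 - 1 := by linear_combination hre
  refine ⟨by simpa [hw₀] using him, ?_⟩
  rcases le_or_gt z.re 0 with hz | hz
  · left; nlinarith [sq_nonneg (w.re + z.re)]
  · right; nlinarith [sq_nonneg (w.re + z.re)]

/-- the analytic branch of `η(z) = (z²-1)^{1/2} - z` on
`ℂ ∖ ((-∞,-1] ∪ [1,∞))` with `η(0) = i` has strictly positive imaginary part. -/
theorem eta_im_pos (η : ℂ → ℂ)
    (hdiff : DifferentiableOn ℂ η pearceyCutᶜ)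
    (hquad : ∀ z ∈ pearceyCutᶜ, η z ^ 2 + 2 * z * η z + 1 = 0)
    (h0 : η 0 = Complex.I) :
    ∀ z ∈ pearceyCutᶜ, 0 < (η z).im := by
  have h0mem : (0 : ℂ) ∈ pearceyCutᶜ := by simp [pearceyCut]
  have hconn : IsPreconnected pearceyCutᶜ :=
    (starConvex_zero_compl_pearceyCut.isPathConnected h0mem).isConnected.isPreconnected
  have hne : ∀ z ∈ pearceyCutᶜ, (η z).im ≠ 0 := fun z hz him ↦
    hz (mem_pearceyCut_of_sq_add_two_mul_mul_add_one_eq_zero (hquad z hz) him)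
  exact fun z hz ↦ hconn.pos_of_ne_zero (continuous_im.comp_continuousOn hdiff.continuousOn) hne
    h0mem (by simp [h0]) hz
end

section
/- The function w₁(z) = ω^{−1} η(z)^{1/3} + ω η(z)^{−1/3}, where η(z) = (z²−1)^{1/2} − z with arg η(z) ∈ (0,π) and ω = e^{2πi/3}, is odd: w₁(−z) = −w₁(z) for all z ∈ ℂ ∖ ((−∞,−1]∪[1,∞)). -/
/-!
On the upper half-plane `η(-z) = -η(z)⁻¹`: both are roots of `x² - 2zx + 1` with positive
imaginary part, and the other root `-η(z)` lies in the lower half-plane. Taking principal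
logarithms, `log(-η⁻¹) = πi - log η`, so `η(-z)^{1/3} = μ η(z)^{-1/3}` with `μ = e^{πi/3}`;
since `ω = μ²` and `μ³ = -1` the two terms of `w₁(-z)` are those of `-w₁(z)`, swapped.
-/

open Complex

open scoped Real

theorem neg_mem_pearceyCut_iff {z : ℂ} : -z ∈ pearceyCut ↔ z ∈ pearceyCut := by
  simp only [pearceyCut, Set.mem_ofPred_eq, neg_im, neg_re, neg_eq_zero, le_neg, neg_neg,
    or_comm]

/-- Of the two roots `-a`, `-a⁻¹` of `x² - 2zx + 1`, only `-a⁻¹` lies in the upper half-plane. -/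
theorem eq_neg_inv_of_quadratic_of_im_pos {a b z : ℂ}
    (ha : a ^ 2 + 2 * z * a + 1 = 0) (hb : b ^ 2 + 2 * -z * b + 1 = 0)
    (haim : 0 < a.im) (hbim : 0 < b.im) : b = -a⁻¹ := by
  have ha0 : a ≠ 0 := fun h => by simp [h] at haim
  have hfactor : (b + a) * (b + a⁻¹) = 0 := by
    field_simp
    linear_combination a * hb + b * ha
  rcases mul_eq_zero.1 hfactor with h | h
  · have : b.im = -a.im := by rw [eq_neg_of_add_eq_zero_left h, neg_im]
    linarith
  · exact eq_neg_of_add_eq_zero_left h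

theorem log_neg_inv_of_im_nonneg {x : ℂ} (hx : x ≠ 0) (him : 0 ≤ x.im) :
    log (-x⁻¹) = π * I - log x := by
  have harg : 0 ≤ x.arg := arg_nonneg_iff.2 him
  have hexp : -x⁻¹ = exp (π * I - log x) := by
    rw [exp_sub, exp_pi_mul_I, exp_log hx, neg_div, one_div]
  rw [hexp, log_exp] <;>
    simp only [sub_im, mul_im, I_im, I_re, ofReal_re, ofReal_im, log_im] <;>
    linarith [arg_le_pi x, Real.pi_pos]

theorem neg_inv_cpow_of_im_nonneg {x : ℂ} (hx : x ≠ 0) (him : 0 ≤ x.im) (s : ℂ) :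
    (-x⁻¹) ^ s = exp (π * I * s) * (x ^ s)⁻¹ := by
  rw [cpow_def_of_ne_zero (by simpa using hx), cpow_def_of_ne_zero hx,
    log_neg_inv_of_im_nonneg hx him, ← exp_neg, ← exp_add]
  ring_nf

theorem inv_sq_mul_add_sq_mul_inv_mul_inv_eq_neg {K : Type*} [Field K] {μ : K}
    (hμ : μ ^ 3 = -1) (u : K) :
    (μ ^ 2)⁻¹ * (μ * u⁻¹) + μ ^ 2 * (μ * u⁻¹)⁻¹ = -((μ ^ 2)⁻¹ * u + μ ^ 2 * u⁻¹) := by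
  have hμ0 : μ ≠ 0 := by rintro rfl; norm_num at hμ
  rcases eq_or_ne u 0 with rfl | hu
  · simp
  field_simp
  linear_combination (u ^ 2 + μ) * hμ

theorem exp_pi_mul_I_div_three_pow_three : exp (π * I / 3) ^ 3 = -1 := by
  rw [← exp_nat_mul, ← exp_pi_mul_I]
  push_cast
  ring_nf

/-- `w₁(z) = ω⁻¹ η(z)^{1/3} + ω η(z)^{-1/3}` is odd on
`ℂ ∖ ((-∞,-1] ∪ [1,∞))`, where `η` is the branch of `(z²-1)^{1/2} - z` with
`Im η > 0` and `ω = e^{2πi/3}`; cube roots are principal. -/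
theorem w1_odd (η : ℂ → ℂ)
    (hquad : ∀ z : ℂ, z ∉ pearceyCut → η z ^ 2 + 2 * z * η z + 1 = 0)
    (him : ∀ z : ℂ, z ∉ pearceyCut → 0 < (η z).im) :
    ∀ z : ℂ, z ∉ pearceyCut →
      (Complex.exp (2 * Real.pi * Complex.I / 3))⁻¹ * η (-z) ^ ((1 : ℂ) / 3)
        + Complex.exp (2 * Real.pi * Complex.I / 3) * (η (-z) ^ ((1 : ℂ) / 3))⁻¹
      = -((Complex.exp (2 * Real.pi * Complex.I / 3))⁻¹ * η z ^ ((1 : ℂ) / 3)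
        + Complex.exp (2 * Real.pi * Complex.I / 3) * (η z ^ ((1 : ℂ) / 3))⁻¹) := by
  intro z hz
  have hz' : -z ∉ pearceyCut := neg_mem_pearceyCut_iff.not.2 hz
  have hη0 : η z ≠ 0 := fun h => by simpa [h] using him z hz
  have hη : η (-z) = -(η z)⁻¹ :=
    eq_neg_inv_of_quadratic_of_im_pos (hquad z hz) (hquad (-z) hz') (him z hz) (him (-z) hz')
  have hω : exp (2 * π * I / 3) = exp (π * I / 3) ^ 2 := by
    rw [← exp_nat_mul]; push_cast; ring_nf
  rw [hη, neg_inv_cpow_of_im_nonneg hη0 (him z hz).le, hω,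
    show π * I * (1 / 3 : ℂ) = π * I / 3 by ring]
  exact inv_sq_mul_add_sq_mul_inv_mul_inv_eq_neg exp_pi_mul_I_div_three_pow_three _
end
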